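/- (Weak continuity of the M3FC MDP transition.) Let 𝒳, 𝒰, 𝒳⁰, 𝒰⁰ be compact metric spaces, with minor kernel p and major kernel p⁰(·|x⁰,u⁰,μ) ∈ 𝒫(𝒳⁰) both Lipschitz with respect to W₁. Define T(x⁰,u⁰,μ,ν) := ∬ p(·|x,u,x⁰,u⁰,μ) ν(dx,du). Then for every continuous bounded f : 𝒳⁰ × 𝒫(𝒳) → ℝ, the map (x⁰,u⁰,μ,ν) ↦ ∫ f(x', T(x⁰,u⁰,μ,ν)) p⁰(dx'|x⁰,u⁰,μ) is continuous on 𝒳⁰ × 𝒰⁰ × 𝒫(𝒳) × 𝒫(𝒳 × 𝒰); i.e., the transition kernel of the M3FC MDP with state (x⁰,μ) and action (ν,u⁰) is weakly continuous. -/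

import Mathlib

open MeasureTheory

/-- `W₁` distance on probability measures, via Kantorovich duality. -/
noncomputable def W1 {X : Type*} [MeasurableSpace X] [PseudoMetricSpace X]
    (μ ν : ProbabilityMeasure X) : ℝ :=
  ⨆ f : {f : X → ℝ // LipschitzWith 1 f},
    |∫ x, (f : X → ℝ) x ∂(μ : Measure X) - ∫ x, (f : X → ℝ) x ∂(ν : Measure X)|

open Filter Topology BoundedContinuousFunction

lemma W1_nonneg {X : Type*} [MeasurableSpace X] [PseudoMetricSpace X]
    (μ ν : ProbabilityMeasure X) : 0 ≤ W1 μ ν :=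
  Real.iSup_nonneg fun _ => abs_nonneg _

lemma W1_le {X : Type*} [MeasurableSpace X] [PseudoMetricSpace X]
    {μ ν : ProbabilityMeasure X} {a : ℝ} (ha : 0 ≤ a)
    (h : ∀ f : X → ℝ, LipschitzWith 1 f →
      |∫ x, f x ∂(μ : Measure X) - ∫ x, f x ∂(ν : Measure X)| ≤ a) : W1 μ ν ≤ a :=
  Real.iSup_le (fun f => h f f.2) ha

lemma W1_self {X : Type*} [MeasurableSpace X] [PseudoMetricSpace X] (μ : ProbabilityMeasure X) :
    W1 μ μ = 0 :=
  le_antisymm (W1_le le_rfl (fun _ _ => by simp)) (W1_nonneg μ μ)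

lemma integrable_of_compact {Y : Type*} [MetricSpace Y] [CompactSpace Y] [MeasurableSpace Y]
    [OpensMeasurableSpace Y] {f : Y → ℝ} (hf : Continuous f) (m : Measure Y) [IsFiniteMeasure m] :
    Integrable f m :=
  (BoundedContinuousFunction.mkOfCompact ⟨f, hf⟩).integrable m

lemma abs_integral_sub_le {α : Type*} [MeasurableSpace α] {m : Measure α} [IsProbabilityMeasure m]
    {h1 h2 : α → ℝ} (i1 : Integrable h1 m) (i2 : Integrable h2 m) {C : ℝ}
    (hC : ∀ x, |h1 x - h2 x| ≤ C) : |∫ x, h1 x ∂m - ∫ x, h2 x ∂m| ≤ C := by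
  rw [← integral_sub i1 i2]
  have := norm_integral_le_of_norm_le_const (μ := m) (f := fun x => h1 x - h2 x) (C := C)
    (ae_of_all _ fun x => by simpa using hC x)
  simpa using this

section NetLemma
variable {X : Type*} [MetricSpace X] [CompactSpace X] [MeasurableSpace X] [BorelSpace X]

lemma eventually_W1_lt (μ : ProbabilityMeasure X) {ε : ℝ} (hε : 0 < ε) :
    ∀ᶠ ν in 𝓝 μ, W1 ν μ < ε := by
  haveI : Nonempty X := μ.nonempty
  set ε' : ℝ := ε / 8 with hε'def
  have hε' : 0 < ε' := by positivity
  obtain ⟨x₀⟩ := ‹Nonempty X›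
  -- bound on distances
  set R : ℝ := ‖BoundedContinuousFunction.mkOfCompact
      (⟨fun x => dist x x₀, (continuous_id.dist continuous_const)⟩ : C(X, ℝ))‖ with hRdef
  have hR : ∀ x : X, dist x x₀ ≤ R := fun x => by
    have := (BoundedContinuousFunction.mkOfCompact
      (⟨fun x => dist x x₀, (continuous_id.dist continuous_const)⟩ : C(X, ℝ))).norm_coe_le_norm x
    rw [BoundedContinuousFunction.mkOfCompact_apply] at this
    simp only [ContinuousMap.coe_mk, Real.norm_eq_abs] at this
    calc dist x x₀ ≤ |dist x x₀| := le_abs_self _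
      _ ≤ R := this
  have hR0 : 0 ≤ R := le_trans dist_nonneg (hR x₀)
  -- finite ε'-net
  obtain ⟨t, tfin, tcov⟩ := (Metric.totallyBounded_iff.mp (isCompact_univ : IsCompact (Set.univ : Set X)).totallyBounded) ε' hε'
  set s : Set X := insert x₀ t with hsdef
  have sfin : s.Finite := tfin.insert x₀
  haveI : Fintype s := sfin.fintype
  haveI : Nonempty s := ⟨⟨x₀, Set.mem_insert _ _⟩⟩
  have hnet : ∀ x : X, ∃ y : s, dist x (y : X) < ε' := by
    intro x
    have := tcov (Set.mem_univ x)
    simp only [Set.mem_iUnion] at this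
    obtain ⟨y, hy, hxy⟩ := this
    exact ⟨⟨y, Set.mem_insert_of_mem _ hy⟩, Metric.mem_ball.mp hxy⟩
  haveI : DecidableEq s := Classical.decEq s
  set M : ℤ := ⌈R / ε'⌉ + 1 with hMdef
  set Z : Finset (s → ℤ) := Fintype.piFinset (fun _ => Finset.Icc (-M) M) with hZdef
  -- the approximating functions
  set g : (s → ℤ) → X → ℝ := fun c x => ⨆ y : s, (ε' * (c y : ℝ) - dist x (y : X)) with hgdef
  have hbddg : ∀ (c : s → ℤ) (x : X),
      BddAbove (Set.range fun y : s => ε' * (c y : ℝ) - dist x (y : X)) :=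
    fun c x => (Set.finite_range _).bddAbove
  have hglip : ∀ c : s → ℤ, LipschitzWith 1 (g c) := by
    intro c
    apply LipschitzWith.of_dist_le_mul
    intro x x'
    have key : ∀ a b : X, g c a ≤ g c b + dist a b := by
      intro a b
      apply ciSup_le
      intro y
      have h1 : ε' * (c y : ℝ) - dist b (y : X) ≤ g c b := le_ciSup (hbddg c b) y
      have h2 : dist a (y : X) ≥ dist b (y : X) - dist a b := by
        have := dist_triangle b a (y : X)
        rw [dist_comm b a] at this
        linarith
      linarith
    rw [Real.dist_eq, abs_sub_le_iff]
    have k1 := key x x'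
    have k2 := key x' x
    rw [dist_comm x' x] at k2
    simp only [NNReal.coe_one, one_mul]
    constructor <;> linarith
  -- approximation of normalized 1-Lipschitz functions
  have approx : ∀ f : X → ℝ, LipschitzWith 1 f → f x₀ = 0 →
      ∃ c ∈ Z, ∀ x, |f x - g c x| ≤ 3 * ε' := by
    intro f hf hf0
    set c : s → ℤ := fun y => ⌊f (y : X) / ε'⌋ with hcdef
    have hfy : ∀ y : s, |f (y : X)| ≤ R := by
      intro y
      have := hf.dist_le_mul (y : X) x₀
      rw [Real.dist_eq, hf0, sub_zero] at this
      simp only [NNReal.coe_one, one_mul] at this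
      exact le_trans this (hR _)
    have hcZ : c ∈ Z := by
      rw [hZdef, Fintype.mem_piFinset]
      intro y
      rw [Finset.mem_Icc]
      have h1 := (abs_le.mp (hfy y)).1
      have h2 := (abs_le.mp (hfy y)).2
      have hcancel : R / ε' * ε' = R := div_mul_cancel₀ _ (ne_of_gt hε')
      have hceil : R / ε' ≤ (⌈R / ε'⌉ : ℝ) := Int.le_ceil _
      constructor
      · rw [hMdef, Int.le_floor]
        push_cast
        rw [le_div_iff₀ hε']
        nlinarith
      · have hdiv : f (y : X) / ε' ≤ R / ε' := by
          gcongr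
        calc ⌊f (y : X) / ε'⌋ ≤ ⌈R / ε'⌉ :=
              le_trans (Int.floor_mono hdiv) (Int.floor_le_ceil _)
          _ ≤ M := by rw [hMdef]; omega
    refine ⟨c, hcZ, fun x => ?_⟩
    have hup : g c x ≤ f x := by
      apply ciSup_le
      intro y
      have hfl : (⌊f (y : X) / ε'⌋ : ℝ) ≤ f (y : X) / ε' := Int.floor_le _
      have hterm : ε' * ((c y : ℤ) : ℝ) ≤ f (y : X) := by
        have := mul_le_mul_of_nonneg_left hfl (le_of_lt hε')
        rw [mul_div_cancel₀ _ (ne_of_gt hε')] at this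
        exact this
      have hlf := hf.dist_le_mul (y : X) x
      rw [Real.dist_eq] at hlf
      simp only [NNReal.coe_one, one_mul] at hlf
      have h4 : f (y : X) - f x ≤ dist (y : X) x := (abs_le.mp hlf).2
      rw [dist_comm] at h4
      linarith
    have hlow : f x - 3 * ε' ≤ g c x := by
      obtain ⟨y, hy⟩ := hnet x
      have hterm : ε' * ((c y : ℤ) : ℝ) - dist x (y : X) ≤ g c x := le_ciSup (hbddg c x) y
      have hfl : f (y : X) / ε' - 1 < (⌊f (y : X) / ε'⌋ : ℝ) := Int.sub_one_lt_floor _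
      have h5 : f (y : X) - ε' < ε' * ((c y : ℤ) : ℝ) := by
        have := mul_lt_mul_of_pos_left hfl hε'
        rw [mul_sub, mul_div_cancel₀ _ (ne_of_gt hε'), mul_one] at this
        linarith
      have hlf := hf.dist_le_mul x (y : X)
      rw [Real.dist_eq] at hlf
      simp only [NNReal.coe_one, one_mul] at hlf
      have h6 : f x - f (y : X) ≤ dist x (y : X) := (abs_le.mp hlf).2
      linarith
    rw [abs_sub_le_iff]
    constructor <;> linarith
  -- each test integral is eventually close
  have hev : ∀ c ∈ Z, ∀ᶠ ν : ProbabilityMeasure X in 𝓝 μ,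
      |∫ x, g c x ∂(ν : Measure X) - ∫ x, g c x ∂(μ : Measure X)| < ε' := by
    intro c _
    set G : X →ᵇ ℝ := BoundedContinuousFunction.mkOfCompact ⟨g c, (hglip c).continuous⟩ with hG
    have hcont := MeasureTheory.ProbabilityMeasure.continuous_integral_boundedContinuousFunction
      (X := X) G
    have ht : Tendsto (fun ν : ProbabilityMeasure X => ∫ x, G x ∂(ν : Measure X)) (𝓝 μ)
        (𝓝 (∫ x, G x ∂(μ : Measure X))) := hcont.tendsto μ
    have := ht.eventually (eventually_abs_sub_lt (∫ x, G x ∂(μ : Measure X)) hε')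
    filter_upwards [this] with ν hν
    exact hν
  have hev2 := (eventually_all_finset Z).mpr hev
  filter_upwards [hev2] with ν hν
  have hmain : W1 ν μ ≤ 7 * ε' := by
    apply W1_le (by positivity)
    intro f hf
    set f' : X → ℝ := fun x => f x - f x₀ with hf'def
    have hf'lip : LipschitzWith 1 f' := by
      apply LipschitzWith.of_dist_le_mul
      intro a b
      rw [hf'def]
      simp only [Real.dist_eq, NNReal.coe_one, one_mul]
      have := hf.dist_le_mul a b
      rw [Real.dist_eq] at this
      simp only [NNReal.coe_one, one_mul] at this
      calc |f a - f x₀ - (f b - f x₀)| = |f a - f b| := by ring_nf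
        _ ≤ dist a b := this
    obtain ⟨c, hcZ, hcapp⟩ := approx f' hf'lip (by rw [hf'def]; ring)
    have hfint : ∀ m : ProbabilityMeasure X, Integrable f (m : Measure X) :=
      fun m => integrable_of_compact hf.continuous _
    have hf'int : ∀ m : ProbabilityMeasure X, Integrable f' (m : Measure X) :=
      fun m => integrable_of_compact hf'lip.continuous _
    have hgint : ∀ m : ProbabilityMeasure X, Integrable (g c) (m : Measure X) :=
      fun m => integrable_of_compact (hglip c).continuous _
    have heq : ∀ m : ProbabilityMeasure X,
        ∫ x, f' x ∂(m : Measure X) = ∫ x, f x ∂(m : Measure X) - f x₀ := by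
      intro m
      rw [hf'def]
      rw [integral_sub (hfint m) (integrable_const _)]
      simp
    have h1 : |∫ x, f x ∂(ν : Measure X) - ∫ x, f x ∂(μ : Measure X)|
        = |∫ x, f' x ∂(ν : Measure X) - ∫ x, f' x ∂(μ : Measure X)| := by
      rw [heq, heq]; ring_nf
    rw [h1]
    have t1 : |∫ x, f' x ∂(ν : Measure X) - ∫ x, g c x ∂(ν : Measure X)| ≤ 3 * ε' :=
      abs_integral_sub_le (hf'int ν) (hgint ν) hcapp
    have t2 : |∫ x, g c x ∂(μ : Measure X) - ∫ x, f' x ∂(μ : Measure X)| ≤ 3 * ε' :=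
      abs_integral_sub_le (hgint μ) (hf'int μ) (fun x => by rw [abs_sub_comm]; exact hcapp x)
    have t3 := hν c hcZ
    calc |∫ x, f' x ∂(ν : Measure X) - ∫ x, f' x ∂(μ : Measure X)|
        ≤ |∫ x, f' x ∂(ν : Measure X) - ∫ x, g c x ∂(ν : Measure X)|
          + |∫ x, g c x ∂(ν : Measure X) - ∫ x, f' x ∂(μ : Measure X)| := abs_sub_le _ _ _
      _ ≤ |∫ x, f' x ∂(ν : Measure X) - ∫ x, g c x ∂(ν : Measure X)|
          + (|∫ x, g c x ∂(ν : Measure X) - ∫ x, g c x ∂(μ : Measure X)|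
            + |∫ x, g c x ∂(μ : Measure X) - ∫ x, f' x ∂(μ : Measure X)|) := by
            have := abs_sub_le (∫ x, g c x ∂(ν : Measure X)) (∫ x, g c x ∂(μ : Measure X))
              (∫ x, f' x ∂(μ : Measure X))
            linarith
      _ ≤ 3 * ε' + (ε' + 3 * ε') := by linarith [le_of_lt t3]
      _ = 7 * ε' := by ring
  have : (7 : ℝ) * ε' < ε := by rw [hε'def]; linarith
  linarith

end NetLemma

lemma lipschitz_approx {Y : Type*} [MetricSpace Y] [CompactSpace Y] [Nonempty Y]
    {g : Y → ℝ} (hg : Continuous g) {ε : ℝ} (hε : 0 < ε) :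
    ∃ K : NNReal, 0 < K ∧ ∃ ℓ : Y → ℝ, LipschitzWith K ℓ ∧ ∀ x, |ℓ x - g x| ≤ ε := by
  obtain ⟨δ, hδ, hδ'⟩ := Metric.uniformContinuous_iff.mp
    (CompactSpace.uniformContinuous_of_continuous hg) ε hε
  set M : ℝ := ‖BoundedContinuousFunction.mkOfCompact ⟨g, hg⟩‖ with hM
  have hMg : ∀ x, |g x| ≤ M := fun x => by
    rw [hM]
    simpa using (BoundedContinuousFunction.mkOfCompact ⟨g, hg⟩).norm_coe_le_norm x
  have hM0 : 0 ≤ M := le_trans (abs_nonneg _) (hMg (Classical.arbitrary Y))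
  set K : NNReal := Real.toNNReal ((2 * M + ε) / δ) + 1 with hK
  have hKpos : 0 < K := by positivity
  have hKge : (2 * M + ε) / δ ≤ (K : ℝ) := by
    rw [hK]
    push_cast
    have := Real.le_coe_toNNReal ((2 * M + ε) / δ)
    linarith
  have hK0 : (0:ℝ) ≤ K := K.coe_nonneg
  set ℓ : Y → ℝ := fun x => ⨅ y : Y, (g y + (K : ℝ) * dist x y) with hℓ
  have hbdd : ∀ x : Y, BddBelow (Set.range fun y => g y + (K : ℝ) * dist x y) := by
    intro x
    refine ⟨-M, ?_⟩
    rintro r ⟨y, rfl⟩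
    have h1 := (abs_le.mp (hMg y)).1
    have h2 := dist_nonneg (x := x) (y := y)
    simp only []
    nlinarith
  have hle : ∀ x, ℓ x ≤ g x := by
    intro x
    have := ciInf_le (hbdd x) x
    simpa using this
  have hge : ∀ x, g x - ε ≤ ℓ x := by
    intro x
    apply le_ciInf
    intro y
    rcases lt_or_ge (dist x y) δ with h | h
    · have := hδ' h
      rw [Real.dist_eq] at this
      have h1 : g x - g y ≤ ε := by cases abs_le.mp this.le; linarith
      nlinarith [dist_nonneg (x := x) (y := y), hK0]
    · have h1 : (2 * M + ε) / δ * δ ≤ (K : ℝ) * dist x y := by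
        apply mul_le_mul hKge h (le_of_lt hδ) hK0
      rw [div_mul_cancel₀ _ (ne_of_gt hδ)] at h1
      have h2 := hMg y
      have h3 := hMg x
      cases abs_le.mp h2; cases abs_le.mp h3; linarith
  have key : ∀ x x' : Y, ℓ x ≤ ℓ x' + (K:ℝ) * dist x x' := by
    intro x x'
    have h : ℓ x - (K:ℝ) * dist x x' ≤ ℓ x' := by
      apply le_ciInf
      intro y
      have h1 : ℓ x ≤ g y + (K:ℝ) * dist x y := ciInf_le (hbdd x) y
      have h2 : dist x y ≤ dist x' y + dist x x' := by
        have := dist_triangle x x' y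
        rw [dist_comm x x'] at this ⊢
        linarith [dist_triangle x x' y]
      nlinarith
    linarith
  have hlip : LipschitzWith K ℓ := by
    apply LipschitzWith.of_dist_le_mul
    intro x x'
    rw [Real.dist_eq, abs_sub_le_iff]
    have k1 := key x x'
    have k2 := key x' x
    rw [dist_comm x' x] at k2
    constructor <;> linarith
  refine ⟨K, hKpos, ℓ, hlip, fun x => ?_⟩
  rw [abs_sub_le_iff]
  constructor
  · linarith [hle x]
  · linarith [hge x]


section Kernels
variable {Y : Type*} [MetricSpace Y] [CompactSpace Y] [MeasurableSpace Y] [BorelSpace Y]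

/-- Scaled Lipschitz test-function bound. -/
lemma lipschitz_int_bound {α : Type*} [PseudoMetricSpace α] [MeasurableSpace α] {m1 m2 : Measure α}
    [IsProbabilityMeasure m1] [IsProbabilityMeasure m2] {K : NNReal} (hK : 0 < K) {ℓ : α → ℝ}
    (hℓ : LipschitzWith K ℓ) {D : ℝ}
    (hD : ∀ f : α → ℝ, LipschitzWith 1 f → |∫ x, f x ∂m1 - ∫ x, f x ∂m2| ≤ D) :
    |∫ x, ℓ x ∂m1 - ∫ x, ℓ x ∂m2| ≤ (K : ℝ) * D := by
  have hKne : (K : ℝ) ≠ 0 := by exact_mod_cast hK.ne'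
  have hKpos : (0 : ℝ) < K := by exact_mod_cast hK
  set f : α → ℝ := fun x => (K : ℝ)⁻¹ * ℓ x with hfdef
  have hflip : LipschitzWith 1 f := by
    apply LipschitzWith.of_dist_le_mul
    intro a b
    rw [hfdef]
    simp only [Real.dist_eq, NNReal.coe_one, one_mul]
    rw [← mul_sub, abs_mul, abs_of_nonneg (inv_nonneg.mpr hKpos.le)]
    have := hℓ.dist_le_mul a b
    rw [Real.dist_eq] at this
    rw [inv_mul_le_iff₀ hKpos]
    exact this
  have h := hD f hflip
  have e1 : ∀ m : Measure α, ∫ x, f x ∂m = (K : ℝ)⁻¹ * ∫ x, ℓ x ∂m := by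
    intro m
    rw [hfdef]
    exact integral_const_mul _ _
  rw [e1, e1, ← mul_sub, abs_mul, abs_of_nonneg (inv_nonneg.mpr hKpos.le),
    inv_mul_le_iff₀ hKpos] at h
  calc |∫ x, ℓ x ∂m1 - ∫ x, ℓ x ∂m2| ≤ (K : ℝ) * D := h
  -- done

/-- A kernel whose integrals against 1-Lipschitz functions are controlled by a function tending
to zero is weakly continuous at the point. -/
lemma tendsto_kernel {A : Type*} [TopologicalSpace A] {κ : A → ProbabilityMeasure Y} {a₀ : A}
    {d : A → ℝ} (hd : Tendsto d (𝓝 a₀) (𝓝 0))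
    (hb : ∀ f : Y → ℝ, LipschitzWith 1 f → ∀ a,
      |∫ y, f y ∂(κ a : Measure Y) - ∫ y, f y ∂(κ a₀ : Measure Y)| ≤ d a) :
    Tendsto κ (𝓝 a₀) (𝓝 (κ a₀)) := by
  haveI : Nonempty Y := (κ a₀).nonempty
  rw [MeasureTheory.ProbabilityMeasure.tendsto_iff_forall_integral_tendsto]
  intro g
  rw [Metric.tendsto_nhds]
  intro ε hε
  obtain ⟨K, hK, ℓ, hℓ, happ⟩ := lipschitz_approx g.continuous (by positivity : (0:ℝ) < ε / 4)
  have hKpos : (0 : ℝ) < K := by exact_mod_cast hK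
  have hd' : ∀ᶠ a in 𝓝 a₀, |d a| < ε / (2 * K) := by
    have : Tendsto (fun a => d a) (𝓝 a₀) (𝓝 0) := hd
    have hpos : (0:ℝ) < ε / (2 * K) := by positivity
    have := this.eventually (eventually_abs_sub_lt 0 hpos)
    simpa using this
  filter_upwards [hd'] with a ha
  rw [Real.dist_eq]
  have hgint : ∀ m : ProbabilityMeasure Y, Integrable (fun y => g y) (m : Measure Y) :=
    fun m => g.integrable _
  have hlint : ∀ m : ProbabilityMeasure Y, Integrable ℓ (m : Measure Y) :=
    fun m => integrable_of_compact hℓ.continuous _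
  have t1 : |∫ y, g y ∂(κ a : Measure Y) - ∫ y, ℓ y ∂(κ a : Measure Y)| ≤ ε / 4 :=
    abs_integral_sub_le (hgint _) (hlint _) (fun y => by
      rw [abs_sub_comm]; exact happ y)
  have t2 : |∫ y, ℓ y ∂(κ a₀ : Measure Y) - ∫ y, g y ∂(κ a₀ : Measure Y)| ≤ ε / 4 :=
    abs_integral_sub_le (hlint _) (hgint _) (fun y => happ y)
  have t3 : |∫ y, ℓ y ∂(κ a : Measure Y) - ∫ y, ℓ y ∂(κ a₀ : Measure Y)| ≤ (K : ℝ) * d a :=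
    lipschitz_int_bound hK hℓ (fun f hf => hb f hf a)
  have hda : (K : ℝ) * d a < ε / 2 := by
    have h1 : d a ≤ |d a| := le_abs_self _
    have h2 : (K : ℝ) * d a ≤ (K : ℝ) * |d a| := by nlinarith [abs_nonneg (d a)]
    have h3 : (K : ℝ) * |d a| < (K : ℝ) * (ε / (2 * K)) := by
      apply mul_lt_mul_of_pos_left ha hKpos
    have h4 : (K : ℝ) * (ε / (2 * K)) = ε / 2 := by
      field_simp
    linarith
  calc |∫ y, g y ∂(κ a : Measure Y) - ∫ y, g y ∂(κ a₀ : Measure Y)|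
      ≤ |∫ y, g y ∂(κ a : Measure Y) - ∫ y, ℓ y ∂(κ a : Measure Y)|
        + |∫ y, ℓ y ∂(κ a : Measure Y) - ∫ y, g y ∂(κ a₀ : Measure Y)| := abs_sub_le _ _ _
    _ ≤ |∫ y, g y ∂(κ a : Measure Y) - ∫ y, ℓ y ∂(κ a : Measure Y)|
        + (|∫ y, ℓ y ∂(κ a : Measure Y) - ∫ y, ℓ y ∂(κ a₀ : Measure Y)|
          + |∫ y, ℓ y ∂(κ a₀ : Measure Y) - ∫ y, g y ∂(κ a₀ : Measure Y)|) := by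
          linarith [abs_sub_le (∫ y, ℓ y ∂(κ a : Measure Y)) (∫ y, ℓ y ∂(κ a₀ : Measure Y))
            (∫ y, g y ∂(κ a₀ : Measure Y))]
    _ < ε / 4 + (ε / 2 + ε / 4) := by linarith
    _ = ε := by ring

/-- Composition with `W1` tends to zero along weak convergence. -/
lemma tendsto_W1_comp {X : Type*} [MetricSpace X] [CompactSpace X] [MeasurableSpace X]
    [BorelSpace X] {A : Type*} [TopologicalSpace A] {φ : A → ProbabilityMeasure X} {a₀ : A}
    (hφ : Tendsto φ (𝓝 a₀) (𝓝 (φ a₀))) :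
    Tendsto (fun a => W1 (φ a) (φ a₀)) (𝓝 a₀) (𝓝 0) := by
  rw [Metric.tendsto_nhds]
  intro ε hε
  filter_upwards [hφ.eventually (eventually_W1_lt (φ a₀) hε)] with a ha
  rw [Real.dist_eq, sub_zero, abs_of_nonneg (W1_nonneg _ _)]
  exact ha

/-- A weakly continuous probability-kernel is measurable as a measure-valued map. -/
lemma measurable_of_cont_kernel {A : Type*} [TopologicalSpace A] [MeasurableSpace A]
    [OpensMeasurableSpace A] {φ : A → ProbabilityMeasure Y} (hφ : Continuous φ) :
    Measurable fun a => (φ a : Measure Y) := by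
  apply Measure.measurable_of_measurable_coe
  have key : ∀ ⦃t : Set Y⦄, MeasurableSet t → Measurable fun a => (φ a : Measure Y) t := by
    apply MeasurableSpace.induction_on_inter
      (C := fun t _ => Measurable fun a => (φ a : Measure Y) t)
      (BorelSpace.measurable_eq.trans rfl) isPiSystem_isOpen
    · simp only [measure_empty]
      exact measurable_const
    · intro t ht
      have hls : LowerSemicontinuous fun a => (φ a : Measure Y) t := by
        intro a c hc
        have hlim := MeasureTheory.ProbabilityMeasure.le_liminf_measure_open_of_tendsto
          (μs := φ) (L := 𝓝 a) (hφ.tendsto a) ht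
        have := lt_of_lt_of_le hc hlim
        exact eventually_lt_of_lt_liminf this
      exact hls.measurable
    · intro t ht hm
      have : (fun a => (φ a : Measure Y) tᶜ) = fun a => 1 - (φ a : Measure Y) t := by
        funext a
        rw [measure_compl ht (measure_ne_top _ _)]
        simp
      rw [this]
      exact Measurable.const_sub hm 1
    · intro t hdisj htm hm
      have : (fun a => (φ a : Measure Y) (⋃ i, t i)) = fun a => ∑' i, (φ a : Measure Y) (t i) := by
        funext a
        exact measure_iUnion hdisj htm
      rw [this]
      exact Measurable.ennreal_tsum hm
  intro s hs
  exact key hs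

/-- Exchange of integral and bind for bounded continuous integrands. -/
lemma integral_bind_bcf {α : Type*} [MeasurableSpace α] (m : Measure α) [IsProbabilityMeasure m]
    (κ : α → ProbabilityMeasure Y) (hκ : Measurable fun a => (κ a : Measure Y)) (g : Y →ᵇ ℝ) :
    ∫ y, g y ∂(m.bind fun a => (κ a : Measure Y))
      = ∫ a, (∫ y, g y ∂(κ a : Measure Y)) ∂m := by
  haveI hB : IsProbabilityMeasure (m.bind fun a => (κ a : Measure Y)) := by
    constructor
    rw [Measure.bind_apply MeasurableSet.univ hκ.aemeasurable]
    simp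
  -- first, the nonneg case
  have key : ∀ g : Y →ᵇ ℝ, (∀ y, 0 ≤ g y) →
      ∫ y, g y ∂(m.bind fun a => (κ a : Measure Y))
        = ∫ a, (∫ y, g y ∂(κ a : Measure Y)) ∂m := by
    intro g hg
    have hgm : Measurable fun y => g y := g.continuous.measurable
    have hof : Measurable fun y => ENNReal.ofReal (g y) :=
      ENNReal.measurable_ofReal.comp hgm
    set L : α → ENNReal := fun a => ∫⁻ y, ENNReal.ofReal (g y) ∂(κ a : Measure Y) with hLdef
    have hLmeas : Measurable L := (Measure.measurable_lintegral hof).comp hκ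
    have hLof : ∀ a, L a = ENNReal.ofReal (∫ y, g y ∂(κ a : Measure Y)) := by
      intro a
      rw [hLdef]
      exact (MeasureTheory.ofReal_integral_eq_lintegral_ofReal (g.integrable _)
        (ae_of_all _ hg)).symm
    have hLne : ∀ a, L a ≠ ⊤ := by
      intro a
      rw [hLof a]
      exact ENNReal.ofReal_ne_top
    have lhs : ∫ y, g y ∂(m.bind fun a => (κ a : Measure Y))
        = (∫⁻ a, L a ∂m).toReal := by
      rw [integral_eq_lintegral_of_nonneg_ae (ae_of_all _ hg)
        g.continuous.measurable.aestronglyMeasurable]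
      congr 1
      exact Measure.lintegral_bind hκ.aemeasurable hof.aemeasurable
    have rhs : ∫ a, (∫ y, g y ∂(κ a : Measure Y)) ∂m = (∫⁻ a, L a ∂m).toReal := by
      rw [integral_eq_lintegral_of_nonneg_ae
        (ae_of_all _ fun a => integral_nonneg hg)
        (by
          have : (fun a => ∫ y, g y ∂(κ a : Measure Y)) = fun a => (L a).toReal := by
            funext a
            rw [hLof a, ENNReal.toReal_ofReal (integral_nonneg hg)]
          rw [this]
          exact hLmeas.ennreal_toReal.aestronglyMeasurable)]
      congr 1
      apply lintegral_congr
      intro a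
      rw [hLof a]
    rw [lhs, rhs]
  -- general case: shift by the norm
  set C : ℝ := ‖g‖ with hCdef
  set g' : Y →ᵇ ℝ := g + BoundedContinuousFunction.const Y C with hg'def
  have hg'pos : ∀ y, 0 ≤ g' y := by
    intro y
    rw [hg'def]
    simp only [BoundedContinuousFunction.coe_add, BoundedContinuousFunction.const_apply,
      Pi.add_apply]
    have := g.norm_coe_le_norm y
    rw [Real.norm_eq_abs] at this
    have := (abs_le.mp this).1
    linarith
  have hkey := key g' hg'pos
  have expand : ∀ (μ' : Measure Y) [IsProbabilityMeasure μ'],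
      ∫ y, g' y ∂μ' = (∫ y, g y ∂μ') + C := by
    intro μ' hμ'
    rw [hg'def]
    simp only [BoundedContinuousFunction.coe_add, BoundedContinuousFunction.const_apply,
      Pi.add_apply]
    rw [integral_add (g.integrable _) (integrable_const _)]
    simp
  rw [expand] at hkey
  have expand2 : ∫ a, (∫ y, g' y ∂(κ a : Measure Y)) ∂m
      = ∫ a, ((∫ y, g y ∂(κ a : Measure Y)) + C) ∂m := by
    apply integral_congr_ae
    filter_upwards with a
    rw [expand]
  rw [expand2] at hkey
  have hmeas : Measurable fun a => ∫ y, g y ∂(κ a : Measure Y) := by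
    have heq : (fun a => ∫ y, g y ∂(κ a : Measure Y))
        = fun a => (∫⁻ y, ENNReal.ofReal (g y + C) ∂(κ a : Measure Y)).toReal - C := by
      funext a
      have hpos : ∀ y, 0 ≤ g y + C := by
        intro y
        have h1 : |g y| ≤ C := by
          rw [hCdef, ← Real.norm_eq_abs]
          exact g.norm_coe_le_norm y
        have := (abs_le.mp h1).1
        linarith
      have h2 : ∫⁻ y, ENNReal.ofReal (g y + C) ∂(κ a : Measure Y)
          = ENNReal.ofReal (∫ y, (g y + C) ∂(κ a : Measure Y)) :=
        (MeasureTheory.ofReal_integral_eq_lintegral_ofReal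
          ((g.integrable _).add (integrable_const _)) (ae_of_all _ hpos)).symm
      rw [h2, ENNReal.toReal_ofReal (integral_nonneg hpos),
        integral_add (g.integrable _) (integrable_const _)]
      simp
    rw [heq]
    apply Measurable.sub_const
    apply Measurable.ennreal_toReal
    apply (Measure.measurable_lintegral ?_).comp hκ
    exact ENNReal.measurable_ofReal.comp (g.continuous.measurable.add_const C)
  have hintmeas : Integrable (fun a => ∫ y, g y ∂(κ a : Measure Y)) m := by
    apply (integrable_const C).mono' hmeas.aestronglyMeasurable
    filter_upwards with a
    have := norm_integral_le_of_norm_le_const (μ := (κ a : Measure Y)) (f := fun y => g y)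
      (C := C) (ae_of_all _ fun y => by rw [hCdef]; exact g.norm_coe_le_norm y)
    simpa using this
  rw [integral_add hintmeas (integrable_const _)] at hkey
  simp only [integral_const, measure_univ, ENNReal.toReal_one, probReal_univ, one_smul, smul_eq_mul] at hkey
  linarith

end Kernels

/-- weak continuity of the M3FC MDP transition. With Lipschitz minor and major
kernels `p`, `p⁰` and `T(x⁰,u⁰,μ,ν) := ∬ p(·|x,u,x⁰,u⁰,μ) ν(dx,du)`, for every continuous
bounded `f : 𝒳⁰ × 𝒫(𝒳) → ℝ` the map
`(x⁰,u⁰,μ,ν) ↦ ∫ f(x', T(x⁰,u⁰,μ,ν)) p⁰(dx'|x⁰,u⁰,μ)` is continuous, i.e. the M3FC MDP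
transition kernel is weakly continuous. -/
theorem statement8 {X U X0 U0 : Type*}
    [MetricSpace X] [CompactSpace X] [MeasurableSpace X] [BorelSpace X]
    [MetricSpace U] [CompactSpace U] [MeasurableSpace U] [BorelSpace U]
    [MetricSpace X0] [CompactSpace X0] [MeasurableSpace X0] [BorelSpace X0]
    [MetricSpace U0] [CompactSpace U0] [MeasurableSpace U0] [BorelSpace U0]
    (Lp Lp0 : ℝ)
    (p : X → U → X0 → U0 → ProbabilityMeasure X → ProbabilityMeasure X)
    (hp : ∀ (x x' : X) (u u' : U) (x0 x0' : X0) (u0 u0' : U0)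
        (μ μ' : ProbabilityMeasure X) (f : X → ℝ), LipschitzWith 1 f →
      |∫ y, f y ∂(p x u x0 u0 μ : Measure X) - ∫ y, f y ∂(p x' u' x0' u0' μ' : Measure X)|
        ≤ Lp * (dist x x' + dist u u' + dist x0 x0' + dist u0 u0' + W1 μ μ'))
    (p0 : X0 → U0 → ProbabilityMeasure X → ProbabilityMeasure X0)
    (hp0 : ∀ (x0 x0' : X0) (u0 u0' : U0) (μ μ' : ProbabilityMeasure X) (f : X0 → ℝ),
        LipschitzWith 1 f →
      |∫ y, f y ∂(p0 x0 u0 μ : Measure X0) - ∫ y, f y ∂(p0 x0' u0' μ' : Measure X0)|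
        ≤ Lp0 * (dist x0 x0' + dist u0 u0' + W1 μ μ'))
    (T : X0 → U0 → ProbabilityMeasure X → ProbabilityMeasure (X × U) → ProbabilityMeasure X)
    (hT : ∀ (x0 : X0) (u0 : U0) (μ : ProbabilityMeasure X) (ν : ProbabilityMeasure (X × U)),
      (T x0 u0 μ ν : Measure X)
        = (ν : Measure (X × U)).bind fun z => (p z.1 z.2 x0 u0 μ : Measure X)) :
    ∀ f : X0 × ProbabilityMeasure X → ℝ, Continuous f → (∃ C, ∀ z, |f z| ≤ C) →
      Continuous fun q :
          X0 × U0 × ProbabilityMeasure X × ProbabilityMeasure (X × U) =>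
        ∫ x', f (x', T q.1 q.2.1 q.2.2.1 q.2.2.2) ∂(p0 q.1 q.2.1 q.2.2.1 : Measure X0) := by
  intro f hf _
  set Q := X0 × U0 × ProbabilityMeasure X × ProbabilityMeasure (X × U) with hQ
  set m : Q → ProbabilityMeasure X0 := fun q => p0 q.1 q.2.1 q.2.2.1 with hm
  set τ : Q → ProbabilityMeasure X := fun q => T q.1 q.2.1 q.2.2.1 q.2.2.2 with hτ
  set F : Q → ℝ := fun q => ∫ x', f (x', τ q) ∂(m q : Measure X0) with hF
  show Continuous F
  rw [continuous_iff_continuousAt]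
  intro q₀
  haveI : Nonempty X := (q₀.2.2.1).nonempty
  -- the distance control function for the major kernel
  have hproj1 : Tendsto (fun q : Q => dist q.1 q₀.1) (𝓝 q₀) (𝓝 0) := by
    have := (continuous_fst.dist (continuous_const : Continuous fun _ : Q => q₀.1)).tendsto q₀
    simpa using this
  have hproj2 : Tendsto (fun q : Q => dist q.2.1 q₀.2.1) (𝓝 q₀) (𝓝 0) := by
    have := (((continuous_fst.comp continuous_snd)).dist
      (continuous_const : Continuous fun _ : Q => q₀.2.1)).tendsto q₀
    simpa using this
  have hprojμ : Tendsto (fun q : Q => q.2.2.1) (𝓝 q₀) (𝓝 q₀.2.2.1) :=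
    ((continuous_fst.comp (continuous_snd.comp continuous_snd))).tendsto q₀
  have hprojν : Tendsto (fun q : Q => q.2.2.2) (𝓝 q₀) (𝓝 q₀.2.2.2) :=
    ((continuous_snd.comp (continuous_snd.comp continuous_snd))).tendsto q₀
  have hW1 : Tendsto (fun q : Q => W1 q.2.2.1 q₀.2.2.1) (𝓝 q₀) (𝓝 0) :=
    tendsto_W1_comp (φ := fun q : Q => q.2.2.1) hprojμ
  have hS : Tendsto (fun q : Q => dist q.1 q₀.1 + dist q.2.1 q₀.2.1 + W1 q.2.2.1 q₀.2.2.1)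
      (𝓝 q₀) (𝓝 0) := by
    have := (hproj1.add hproj2).add hW1
    simpa using this
  have hSnonneg : ∀ q : Q, 0 ≤ dist q.1 q₀.1 + dist q.2.1 q₀.2.1 + W1 q.2.2.1 q₀.2.2.1 :=
    fun q => add_nonneg (add_nonneg dist_nonneg dist_nonneg) (W1_nonneg _ _)
  -- (I) weak continuity of the major kernel
  have hm_tendsto : Tendsto m (𝓝 q₀) (𝓝 (m q₀)) := by
    apply tendsto_kernel
      (d := fun q : Q => |Lp0| * (dist q.1 q₀.1 + dist q.2.1 q₀.2.1 + W1 q.2.2.1 q₀.2.2.1))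
    · have := hS.const_mul |Lp0|
      simpa using this
    · intro g hg q
      have h := hp0 q.1 q₀.1 q.2.1 q₀.2.1 q.2.2.1 q₀.2.2.1 g hg
      calc |∫ y, g y ∂(m q : Measure X0) - ∫ y, g y ∂(m q₀ : Measure X0)|
          ≤ Lp0 * (dist q.1 q₀.1 + dist q.2.1 q₀.2.1 + W1 q.2.2.1 q₀.2.2.1) := h
        _ ≤ |Lp0| * (dist q.1 q₀.1 + dist q.2.1 q₀.2.1 + W1 q.2.2.1 q₀.2.2.1) :=
            mul_le_mul_of_nonneg_right (le_abs_self _) (hSnonneg q)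
  -- kernel z ↦ p z is weakly continuous and measurable
  have hker_cont : ∀ (x0 : X0) (u0 : U0) (μ : ProbabilityMeasure X),
      Continuous fun z : X × U => p z.1 z.2 x0 u0 μ := by
    intro x0 u0 μ
    rw [continuous_iff_continuousAt]
    intro z₀
    apply tendsto_kernel (d := fun z : X × U => |Lp| * (dist z.1 z₀.1 + dist z.2 z₀.2))
    · have h1 : Tendsto (fun z : X × U => dist z.1 z₀.1) (𝓝 z₀) (𝓝 0) := by
        have := (continuous_fst.dist
          (continuous_const : Continuous fun _ : X × U => z₀.1)).tendsto z₀
        simpa using this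
      have h2 : Tendsto (fun z : X × U => dist z.2 z₀.2) (𝓝 z₀) (𝓝 0) := by
        have := (continuous_snd.dist
          (continuous_const : Continuous fun _ : X × U => z₀.2)).tendsto z₀
        simpa using this
      have := (h1.add h2).const_mul |Lp|
      simpa using this
    · intro g hg z
      have h := hp z.1 z₀.1 z.2 z₀.2 x0 x0 u0 u0 μ μ g hg
      rw [dist_self, dist_self, W1_self] at h
      have hzn : 0 ≤ dist z.1 z₀.1 + dist z.2 z₀.2 := by positivity
      calc |∫ y, g y ∂(p z.1 z.2 x0 u0 μ : Measure X) -
            ∫ y, g y ∂(p z₀.1 z₀.2 x0 u0 μ : Measure X)|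
          ≤ Lp * (dist z.1 z₀.1 + dist z.2 z₀.2) := by
            have : dist z.1 z₀.1 + dist z.2 z₀.2 + 0 + 0 + 0
                = dist z.1 z₀.1 + dist z.2 z₀.2 := by ring
            rw [this] at h
            exact h
        _ ≤ |Lp| * (dist z.1 z₀.1 + dist z.2 z₀.2) :=
            mul_le_mul_of_nonneg_right (le_abs_self _) hzn
  have hker_meas : ∀ (x0 : X0) (u0 : U0) (μ : ProbabilityMeasure X),
      Measurable fun z : X × U => (p z.1 z.2 x0 u0 μ : Measure X) :=
    fun x0 u0 μ => measurable_of_cont_kernel (hker_cont x0 u0 μ)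
  -- the integral formula for T
  have hint : ∀ (q : Q) (g : X →ᵇ ℝ),
      ∫ y, g y ∂(τ q : Measure X)
        = ∫ z, (∫ y, g y ∂(p z.1 z.2 q.1 q.2.1 q.2.2.1 : Measure X))
            ∂(q.2.2.2 : Measure (X × U)) := by
    intro q g
    have h := hT q.1 q.2.1 q.2.2.1 q.2.2.2
    calc ∫ y, g y ∂(τ q : Measure X)
        = ∫ y, g y ∂((q.2.2.2 : Measure (X × U)).bind
            fun z => (p z.1 z.2 q.1 q.2.1 q.2.2.1 : Measure X)) := by rw [hτ]; rw [h]
      _ = ∫ z, (∫ y, g y ∂(p z.1 z.2 q.1 q.2.1 q.2.2.1 : Measure X))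
            ∂(q.2.2.2 : Measure (X × U)) :=
          integral_bind_bcf _ (fun z : X × U => p z.1 z.2 q.1 q.2.1 q.2.2.1)
            (hker_meas _ _ _) g
  -- (II) weak continuity of T
  have hτ_tendsto : Tendsto τ (𝓝 q₀) (𝓝 (τ q₀)) := by
    rw [MeasureTheory.ProbabilityMeasure.tendsto_iff_forall_integral_tendsto]
    intro g
    rw [Metric.tendsto_nhds]
    intro ε hε
    obtain ⟨K, hK, ℓ, hℓ, happ⟩ := lipschitz_approx g.continuous
      (show (0:ℝ) < ε / 6 by positivity)
    have hKpos : (0:ℝ) < K := by exact_mod_cast hK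
    set H : Q → (X × U) → ℝ :=
      fun q z => ∫ y, g y ∂(p z.1 z.2 q.1 q.2.1 q.2.2.1 : Measure X) with hH
    have hHcont : ∀ q : Q, Continuous (H q) := by
      intro q
      exact (MeasureTheory.ProbabilityMeasure.continuous_integral_boundedContinuousFunction
        (X := X) g).comp (hker_cont q.1 q.2.1 q.2.2.1)
    have hHint : ∀ (q : Q) (ν : ProbabilityMeasure (X × U)),
        Integrable (H q) (ν : Measure (X × U)) :=
      fun q ν => integrable_of_compact (hHcont q) _
    -- pointwise closeness of H q and H q₀
    have hHclose : ∀ (q : Q) (z : X × U), |H q z - H q₀ z|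
        ≤ 2 * (ε / 6) + (K : ℝ) * (|Lp| *
          (dist q.1 q₀.1 + dist q.2.1 q₀.2.1 + W1 q.2.2.1 q₀.2.2.1)) := by
      intro q z
      have hgi : ∀ m' : ProbabilityMeasure X, Integrable (fun y => g y) (m' : Measure X) :=
        fun m' => g.integrable _
      have hli : ∀ m' : ProbabilityMeasure X, Integrable ℓ (m' : Measure X) :=
        fun m' => integrable_of_compact hℓ.continuous _
      have t1 : |∫ y, g y ∂(p z.1 z.2 q.1 q.2.1 q.2.2.1 : Measure X)
          - ∫ y, ℓ y ∂(p z.1 z.2 q.1 q.2.1 q.2.2.1 : Measure X)| ≤ ε / 6 :=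
        abs_integral_sub_le (hgi _) (hli _) (fun y => by rw [abs_sub_comm]; exact happ y)
      have t3 : |∫ y, ℓ y ∂(p z.1 z.2 q₀.1 q₀.2.1 q₀.2.2.1 : Measure X)
          - ∫ y, g y ∂(p z.1 z.2 q₀.1 q₀.2.1 q₀.2.2.1 : Measure X)| ≤ ε / 6 :=
        abs_integral_sub_le (hli _) (hgi _) (fun y => happ y)
      have t2 : |∫ y, ℓ y ∂(p z.1 z.2 q.1 q.2.1 q.2.2.1 : Measure X)
          - ∫ y, ℓ y ∂(p z.1 z.2 q₀.1 q₀.2.1 q₀.2.2.1 : Measure X)|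
          ≤ (K : ℝ) * (|Lp| *
            (dist q.1 q₀.1 + dist q.2.1 q₀.2.1 + W1 q.2.2.1 q₀.2.2.1)) := by
        apply lipschitz_int_bound hK hℓ
        intro f' hf'
        have h := hp z.1 z.1 z.2 z.2 q.1 q₀.1 q.2.1 q₀.2.1 q.2.2.1 q₀.2.2.1 f' hf'
        rw [dist_self, dist_self] at h
        have heq : (0:ℝ) + 0 + dist q.1 q₀.1 + dist q.2.1 q₀.2.1 + W1 q.2.2.1 q₀.2.2.1
            = dist q.1 q₀.1 + dist q.2.1 q₀.2.1 + W1 q.2.2.1 q₀.2.2.1 := by ring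
        rw [heq] at h
        calc |∫ y, f' y ∂(p z.1 z.2 q.1 q.2.1 q.2.2.1 : Measure X)
            - ∫ y, f' y ∂(p z.1 z.2 q₀.1 q₀.2.1 q₀.2.2.1 : Measure X)|
            ≤ Lp * (dist q.1 q₀.1 + dist q.2.1 q₀.2.1 + W1 q.2.2.1 q₀.2.2.1) := h
          _ ≤ |Lp| * (dist q.1 q₀.1 + dist q.2.1 q₀.2.1 + W1 q.2.2.1 q₀.2.2.1) :=
              mul_le_mul_of_nonneg_right (le_abs_self _) (hSnonneg q)
      calc |H q z - H q₀ z|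
          ≤ |∫ y, g y ∂(p z.1 z.2 q.1 q.2.1 q.2.2.1 : Measure X)
              - ∫ y, ℓ y ∂(p z.1 z.2 q.1 q.2.1 q.2.2.1 : Measure X)|
            + |∫ y, ℓ y ∂(p z.1 z.2 q.1 q.2.1 q.2.2.1 : Measure X) - H q₀ z| := abs_sub_le _ _ _
        _ ≤ |∫ y, g y ∂(p z.1 z.2 q.1 q.2.1 q.2.2.1 : Measure X)
              - ∫ y, ℓ y ∂(p z.1 z.2 q.1 q.2.1 q.2.2.1 : Measure X)|
            + (|∫ y, ℓ y ∂(p z.1 z.2 q.1 q.2.1 q.2.2.1 : Measure X)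
              - ∫ y, ℓ y ∂(p z.1 z.2 q₀.1 q₀.2.1 q₀.2.2.1 : Measure X)|
              + |∫ y, ℓ y ∂(p z.1 z.2 q₀.1 q₀.2.1 q₀.2.2.1 : Measure X) - H q₀ z|) := by
              linarith [abs_sub_le (∫ y, ℓ y ∂(p z.1 z.2 q.1 q.2.1 q.2.2.1 : Measure X))
                (∫ y, ℓ y ∂(p z.1 z.2 q₀.1 q₀.2.1 q₀.2.2.1 : Measure X)) (H q₀ z)]
        _ ≤ 2 * (ε / 6) + (K : ℝ) * (|Lp| *
            (dist q.1 q₀.1 + dist q.2.1 q₀.2.1 + W1 q.2.2.1 q₀.2.2.1)) := by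
            have := t1
            have := t2
            have := t3
            linarith
    -- eventually bounds
    have hsmall : ∀ᶠ q : Q in 𝓝 q₀, (K : ℝ) * (|Lp| *
        (dist q.1 q₀.1 + dist q.2.1 q₀.2.1 + W1 q.2.2.1 q₀.2.2.1)) < ε / 6 := by
      have ht : Tendsto (fun q : Q => (K : ℝ) * (|Lp| *
          (dist q.1 q₀.1 + dist q.2.1 q₀.2.1 + W1 q.2.2.1 q₀.2.2.1))) (𝓝 q₀) (𝓝 0) := by
        have := (hS.const_mul |Lp|).const_mul (K : ℝ)
        simpa [mul_assoc] using this
      have := ht.eventually (eventually_abs_sub_lt 0 (show (0:ℝ) < ε / 6 by positivity))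
      filter_upwards [this] with q hq
      rw [sub_zero] at hq
      exact lt_of_le_of_lt (le_abs_self _) hq
    have hνev : ∀ᶠ q : Q in 𝓝 q₀,
        |∫ z, H q₀ z ∂(q.2.2.2 : Measure (X × U))
          - ∫ z, H q₀ z ∂(q₀.2.2.2 : Measure (X × U))| < ε / 6 := by
      set Hb : (X × U) →ᵇ ℝ := BoundedContinuousFunction.mkOfCompact ⟨H q₀, hHcont q₀⟩ with hHb
      have hcont := MeasureTheory.ProbabilityMeasure.continuous_integral_boundedContinuousFunction
        (X := X × U) Hb
      have ht : Tendsto (fun q : Q => ∫ z, Hb z ∂(q.2.2.2 : Measure (X × U))) (𝓝 q₀)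
          (𝓝 (∫ z, Hb z ∂(q₀.2.2.2 : Measure (X × U)))) :=
        (hcont.tendsto _).comp hprojν
      have := ht.eventually (eventually_abs_sub_lt _ (show (0:ℝ) < ε / 6 by positivity))
      filter_upwards [this] with q hq
      have hHbeq : ∀ z, Hb z = H q₀ z := fun z => rfl
      simpa [hHbeq] using hq
    filter_upwards [hsmall, hνev] with q hq1 hq2
    rw [Real.dist_eq, hint q g, hint q₀ g]
    have ta : |∫ z, H q z ∂(q.2.2.2 : Measure (X × U))
        - ∫ z, H q₀ z ∂(q.2.2.2 : Measure (X × U))|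
        ≤ 2 * (ε / 6) + (K : ℝ) * (|Lp| *
          (dist q.1 q₀.1 + dist q.2.1 q₀.2.1 + W1 q.2.2.1 q₀.2.2.1)) :=
      abs_integral_sub_le (hHint q _) (hHint q₀ _) (fun z => hHclose q z)
    calc |∫ z, H q z ∂(q.2.2.2 : Measure (X × U))
        - ∫ z, H q₀ z ∂(q₀.2.2.2 : Measure (X × U))|
        ≤ |∫ z, H q z ∂(q.2.2.2 : Measure (X × U))
            - ∫ z, H q₀ z ∂(q.2.2.2 : Measure (X × U))|
          + |∫ z, H q₀ z ∂(q.2.2.2 : Measure (X × U))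
            - ∫ z, H q₀ z ∂(q₀.2.2.2 : Measure (X × U))| := abs_sub_le _ _ _
      _ < (2 * (ε / 6) + ε / 6) + ε / 6 := by linarith
      _ ≤ ε := by linarith
  -- curry machinery for the final assembly
  set fswap : C(ProbabilityMeasure X × X0, ℝ) :=
    ⟨fun yz => f (yz.2, yz.1), hf.comp (continuous_snd.prodMk continuous_fst)⟩ with hfswap
  set Fc : C(ProbabilityMeasure X, C(X0, ℝ)) := fswap.curry with hFc
  have hfint : ∀ (y : ProbabilityMeasure X) (m' : ProbabilityMeasure X0),
      Integrable (fun x' => f (x', y)) (m' : Measure X0) :=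
    fun y m' => integrable_of_compact (hf.comp (continuous_id.prodMk continuous_const)) _
  have hA1 : ∀ q : Q, |F q - ∫ x', f (x', τ q₀) ∂(m q : Measure X0)|
      ≤ dist (Fc (τ q)) (Fc (τ q₀)) := by
    intro q
    apply abs_integral_sub_le (hfint _ _) (hfint _ _)
    intro x'
    have := ContinuousMap.dist_apply_le_dist (f := Fc (τ q)) (g := Fc (τ q₀)) x'
    rw [Real.dist_eq] at this
    exact this
  have hA1t : Tendsto (fun q : Q => dist (Fc (τ q)) (Fc (τ q₀))) (𝓝 q₀) (𝓝 0) := by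
    have h1 : Tendsto (fun q : Q => Fc (τ q)) (𝓝 q₀) (𝓝 (Fc (τ q₀))) :=
      (Fc.continuous.tendsto _).comp hτ_tendsto
    have := h1.dist (tendsto_const_nhds (x := Fc (τ q₀)))
    simpa using this
  have hA2t : Tendsto (fun q : Q => ∫ x', f (x', τ q₀) ∂(m q : Measure X0)) (𝓝 q₀)
      (𝓝 (F q₀)) := by
    set gb : X0 →ᵇ ℝ := BoundedContinuousFunction.mkOfCompact
      ⟨fun x' => f (x', τ q₀), hf.comp (continuous_id.prodMk continuous_const)⟩ with hgb
    have hcont := MeasureTheory.ProbabilityMeasure.continuous_integral_boundedContinuousFunction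
      (X := X0) gb
    have ht : Tendsto (fun q : Q => ∫ x', gb x' ∂(m q : Measure X0)) (𝓝 q₀)
        (𝓝 (∫ x', gb x' ∂(m q₀ : Measure X0))) := (hcont.tendsto _).comp hm_tendsto
    have hgbeq : ∀ x', gb x' = f (x', τ q₀) := fun x' => rfl
    simpa [hgbeq, hF] using ht
  -- squeeze
  have hdist : Tendsto (fun q : Q => |F q - F q₀|) (𝓝 q₀) (𝓝 0) := by
    apply squeeze_zero (fun q => abs_nonneg _)
      (g := fun q : Q => dist (Fc (τ q)) (Fc (τ q₀))
        + |∫ x', f (x', τ q₀) ∂(m q : Measure X0) - F q₀|)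
    · intro q
      calc |F q - F q₀|
          ≤ |F q - ∫ x', f (x', τ q₀) ∂(m q : Measure X0)|
            + |∫ x', f (x', τ q₀) ∂(m q : Measure X0) - F q₀| := abs_sub_le _ _ _
        _ ≤ dist (Fc (τ q)) (Fc (τ q₀))
            + |∫ x', f (x', τ q₀) ∂(m q : Measure X0) - F q₀| := by linarith [hA1 q]
    · have h2 : Tendsto (fun q : Q => |∫ x', f (x', τ q₀) ∂(m q : Measure X0) - F q₀|)
          (𝓝 q₀) (𝓝 0) := by
        have := (hA2t.sub (tendsto_const_nhds (x := F q₀))).abs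
        simpa using this
      have := hA1t.add h2
      simpa using this
  rw [ContinuousAt, tendsto_iff_dist_tendsto_zero]
  have : (fun q : Q => dist (F q) (F q₀)) = fun q : Q => |F q - F q₀| := by
    funext q
    rw [Real.dist_eq]
  rw [this]
  exact hdist
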